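/- In an ordered Θ_k-graph G = (V, E) with k ≥ 2 on n vertices, for every source vertex s ∈ V there exist m ≤ n − 1 and vertices u₀ = s, u₁, …, u_m = v₁ such that for each 0 ≤ i < m the vertex u_{i+1} is the ordered Θ-routing step target of u_i towards v₁; moreover ρ(u_{i+1}) < ρ(u_i) for every 0 ≤ i < m. In other words, ordered Θ-routing towards the first inserted vertex v₁ always reaches v₁ in at most n − 1 hops. -/

import Mathlib

/-!
Ordered Θ_k-graphs: common definitions.

Points live in the plane, modelled as `ℂ`.  For a point `u`, the plane is
partitioned into `k` cones of aperture `θ = 2π/k`; cone `j` has as bisector the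
ray from `u` in direction `exp((π/2 - j·θ)·I)` (cone `0` points upwards, cones
are numbered clockwise).  A point `w ≠ u` lies (in the interior of) cone `j` of
`u` iff the angle between `w - u` and the bisector is `< θ/2`.  `projDist`
measures the length of the orthogonal projection of `w - u` onto the bisector
of cone `j`.  Insertion orders: vertex `i : Fin n` is the `(i+1)`-st inserted
vertex, so `ρ(v) < ρ(u)` is `v < u`.
-/

namespace OrderedTheta

noncomputable def theta (k : ℕ) : ℝ := 2 * Real.pi / k

/-- Unit vector along the bisector of the `j`-th cone. -/
noncomputable def dir (k j : ℕ) : ℂ :=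
  Complex.exp ((Real.pi / 2 - j * theta k) * Complex.I)

/-- `w` lies in the (open) cone number `j` of apex `u`. -/
def inCone (k : ℕ) (u w : ℂ) (j : ℕ) : Prop :=
  w ≠ u ∧ |Complex.arg ((w - u) / dir k j)| < theta k / 2

/-- The distance `|u w'|` from `u` to the orthogonal projection `w'` of `w`
onto the bisector of cone `j` of `u` (for `w` in the open cone `j` this equals
the signed component of `w - u` along the bisector direction). -/
noncomputable def projDist (k : ℕ) (u w : ℂ) (j : ℕ) : ℝ :=
  ((w - u) * (starRingEnd ℂ) (dir k j)).re

/-- A sequence of `n` distinct points in the plane, in general position, to be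
inserted in the order of their indices; `V i` is the `(i+1)`-st inserted point. -/
structure Config (k n : ℕ) : Type where
  two_le_k : 2 ≤ k
  V : Fin n → ℂ
  inj : Function.Injective V
  /-- no previously inserted point lies on a boundary ray of a cone of `V i`:
  every earlier point lies in the open cone of some index `c < k`. -/
  gp_cone : ∀ i j : Fin n, j < i → ∃ c < k, inCone k (V i) (V j) c
  /-- two distinct earlier points lying in a common cone of `V i` have distinct
  bisector-projection distances from `V i`. -/
  gp_dist : ∀ i j l : Fin n, j < i → l < i → j ≠ l →
    ∀ c < k, inCone k (V i) (V j) c → inCone k (V i) (V l) c →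
      projDist k (V i) (V j) c ≠ projDist k (V i) (V l) c

/-- The edge created upon insertion of `i`, towards the earlier point `j`:
`j` is inserted before `i`, and among all earlier points in the cone of `i`
containing `j`, `j` is closest (measured along the bisector). -/
def EdgeDir {k n : ℕ} (C : Config k n) (i j : Fin n) : Prop :=
  j < i ∧ ∃ c < k, inCone k (C.V i) (C.V j) c ∧
    ∀ l : Fin n, l < i → inCone k (C.V i) (C.V l) c →
      projDist k (C.V i) (C.V j) c ≤ projDist k (C.V i) (C.V l) c

/-- The ordered Θ_k-graph of a configuration, as an undirected simple graph on
`Fin n`. -/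
def graph {k n : ℕ} (C : Config k n) : SimpleGraph (Fin n) where
  Adj i j := EdgeDir C i j ∨ EdgeDir C j i
  symm := ⟨fun _ _ hij => hij.symm⟩
  loopless := by
    refine ⟨fun i h => ?_⟩
    rcases h with h | h <;> exact absurd h.1 (lt_irrefl i)

/-- `x` lies in the canonical triangle `Δ u w`: `x` lies in the cone of `u`
containing `w` and its projection onto the bisector is at distance at most
`|u w'|` from `u`. -/
def inCanonical (k : ℕ) (u w x : ℂ) : Prop :=
  ∃ c < k, inCone k u w c ∧ inCone k u x c ∧ projDist k u x c ≤ projDist k u w c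

/-- `v` is the target of an ordered Θ-routing step from `u` towards the first
inserted vertex `v₁`: it is `v₁` itself if `{u, v₁}` is an edge, and otherwise
the neighbour of `u` of smaller insertion order lying in the canonical triangle
`Δ u v₁` whose bisector projection is closest to `u`. -/
def IsRoutingStep {k n : ℕ} (C : Config k n) (hn : 0 < n) (u v : Fin n) : Prop :=
  ((graph C).Adj u ⟨0, hn⟩ ∧ v = ⟨0, hn⟩) ∨
  (¬ (graph C).Adj u ⟨0, hn⟩ ∧ (graph C).Adj u v ∧ v < u ∧
    inCanonical k (C.V u) (C.V ⟨0, hn⟩) (C.V v) ∧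
    ∀ w : Fin n, (graph C).Adj u w → w < u →
      inCanonical k (C.V u) (C.V ⟨0, hn⟩) (C.V w) →
      ∀ c < k, inCone k (C.V u) (C.V v) c → inCone k (C.V u) (C.V w) c →
        projDist k (C.V u) (C.V v) c ≤ projDist k (C.V u) (C.V w) c)

/-- `u'` is an exploration candidate neighbour of `u` (with respect to the
destination `t`): `u'` is a neighbour of `u` with `ρ(u) < ρ(u') ≤ ρ(t)` such
that `u` lies in the interior of the cone of `u'` containing `v₁`. -/
def ExplCand {k n : ℕ} (C : Config k n) (hn : 0 < n) (t u u' : Fin n) : Prop :=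
  (graph C).Adj u u' ∧ u < u' ∧ u' ≤ t ∧
  ∃ c < k, inCone k (C.V u') (C.V ⟨0, hn⟩) c ∧ inCone k (C.V u') (C.V u) c

/-- The exploration space `S(v₁)`: the smallest set of vertices containing `v₁`
and closed under taking exploration candidate neighbours. -/
inductive InExplSpace {k n : ℕ} (C : Config k n) (hn : 0 < n) (t : Fin n) : Fin n → Prop
  | base : InExplSpace C hn t ⟨0, hn⟩
  | step {u u' : Fin n} :
      InExplSpace C hn t u → ExplCand C hn t u u' → InExplSpace C hn t u'

/-- The label of a vertex: its coordinates together with its insertion order. -/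
noncomputable def label {k n : ℕ} (C : Config k n) (v : Fin n) : ℂ × ℕ :=
  (C.V v, (v : ℕ) + 1)

/-- The vertices at graph distance at most `h` from `u`. -/
def ball {k n : ℕ} (C : Config k n) (u : Fin n) (h : ℕ) : Set (Fin n) :=
  {v | ∃ p : (graph C).Walk u v, p.length ≤ h}

/-- The data visible to an `h`-local algorithm: a labelled vertex set together
with a labelled edge set. -/
abbrev LocalView : Type := Set (ℂ × ℕ) × Set ((ℂ × ℕ) × (ℂ × ℕ))

/-- The `h`-neighbourhood `B_h(u)`: the induced labelled subgraph on all
vertices at graph distance at most `h` from `u`. -/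
noncomputable def view {k n : ℕ} (C : Config k n) (u : Fin n) (h : ℕ) : LocalView :=
  (label C '' ball C u h,
   {e | ∃ a ∈ ball C u h, ∃ b ∈ ball C u h,
      (graph C).Adj a b ∧ e = (label C a, label C b)})

/-- One step of the descending algorithm `A^down`: move to the neighbour of
minimum insertion order among the neighbours of smaller insertion order. -/
def AdownStep {k n : ℕ} (C : Config k n) (u v : Fin n) : Prop :=
  (graph C).Adj u v ∧ v < u ∧ ∀ v' : Fin n, (graph C).Adj u v' → v' < u → v ≤ v'

/-- The angle of the vector `v - u`, measured counterclockwise from the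
positive horizontal direction, normalised to `[0, 2π)`. -/
noncomputable def alpha (u v : ℂ) : ℝ :=
  if 0 ≤ Complex.arg (v - u) then Complex.arg (v - u)
  else Complex.arg (v - u) + 2 * Real.pi

/-- One step of the algorithm `A^up(v₁, t)` on states
`(current vertex, previous vertex, exploration bit)`. -/
def AupStep {k n : ℕ} (C : Config k n) (hn : 0 < n) (t : Fin n)
    (s s' : Fin n × Option (Fin n) × Bool) : Prop :=
  s.1 ≠ t ∧
  ((s.2.2 = true ∧
     ((∃ v : Fin n, ExplCand C hn t s.1 v ∧
         (∀ v' : Fin n, ExplCand C hn t s.1 v' →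
           alpha (C.V s.1) (C.V v) ≤ alpha (C.V s.1) (C.V v')) ∧
         s' = (v, some s.1, true)) ∨
      ((¬ ∃ v : Fin n, ExplCand C hn t s.1 v) ∧
        ∃ u' : Fin n, IsRoutingStep C hn s.1 u' ∧ s' = (u', some s.1, false)))) ∨
   (s.2.2 = false ∧ ∃ p : Fin n, s.2.1 = some p ∧
     ((∃ v : Fin n,
         (ExplCand C hn t s.1 v ∧ alpha (C.V s.1) (C.V p) < alpha (C.V s.1) (C.V v)) ∧
         (∀ v' : Fin n, ExplCand C hn t s.1 v' →
           alpha (C.V s.1) (C.V p) < alpha (C.V s.1) (C.V v') →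
           alpha (C.V s.1) (C.V v) ≤ alpha (C.V s.1) (C.V v')) ∧
         s' = (v, some s.1, true)) ∨
      ((¬ ∃ v : Fin n, ExplCand C hn t s.1 v ∧
          alpha (C.V s.1) (C.V p) < alpha (C.V s.1) (C.V v)) ∧
        ∃ u' : Fin n, IsRoutingStep C hn s.1 u' ∧ s' = (u', some s.1, false)))))

/-- The point sequence defining `L_h^k` (0-based index `j` is the `(j+1)`-st
inserted point `v_{j+1}`). -/
noncomputable def Lpt (h k : ℕ) (ε : ℝ) (j : ℕ) : ℂ :=
  if j = 0 then 0
  else if j = 2 * h + 1 then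
    ((-2 : ℝ) : ℂ) + ((-(2 * (h : ℝ)) * ε : ℝ) : ℂ) * Complex.I
  else if j = 2 * h + 2 then
    ((-2 / Real.tan (theta k / 2) - 3 * (h : ℝ) * ε : ℝ) : ℂ) * Complex.I
  else if j % 2 = 1 then
    (((((j + 1) / 2 : ℕ) : ℝ) / (h : ℝ) : ℝ) + ((-(((j + 1) / 2 : ℕ) : ℝ) * ε : ℝ) : ℂ) * Complex.I)
  else
    ((-(((j / 2 : ℕ) : ℝ) / (h : ℝ)) : ℝ) + ((-(((j / 2 : ℕ) : ℝ)) * ε : ℝ) : ℂ) * Complex.I)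

/-- The point sequence defining `R_h^k`: identical to the one for `L_h^k`
except that `v_{2h+2}` is placed at `(2, -2hε)` instead of `(-2, -2hε)`. -/
noncomputable def Rpt (h k : ℕ) (ε : ℝ) (j : ℕ) : ℂ :=
  if j = 2 * h + 1 then ((2 : ℝ) : ℂ) + ((-(2 * (h : ℝ)) * ε : ℝ) : ℂ) * Complex.I
  else Lpt h k ε j


/-!
From a vertex `u ≠ v₁`, the cone of `u` containing `v₁` holds an earlier point, so the
earlier point closest to `u` in that cone is a neighbour of `u` lying in `Δ u v₁`; hence a
routing step to a vertex of smaller insertion order always exists. Since a point lies in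
only one cone of `u`, this neighbour is also the minimiser the routing rule asks for.
Following such steps the insertion order strictly decreases, so `v₁` is reached after at
most `ρ(s) - 1 ≤ n - 1` hops.
-/

lemma exists_descending_chain {n : ℕ} (R : Fin n → Fin n → Prop) (t : Fin n)
    (hR : ∀ u ≠ t, ∃ v, R u v ∧ v < u) (u : Fin n) :
    ∃ m ≤ (u : ℕ), ∃ f : ℕ → Fin n, f 0 = u ∧ f m = t ∧
      ∀ i < m, R (f i) (f (i + 1)) ∧ f (i + 1) < f i := by
  induction u using WellFoundedLT.induction with
  | _ u ih =>
    by_cases hut : u = t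
    · exact ⟨0, Nat.zero_le _, fun _ => u, rfl, hut, by simp⟩
    obtain ⟨v, huv, hvu⟩ := hR u hut
    obtain ⟨m, hm, f, rfl, hfm, hf⟩ := ih v hvu
    refine ⟨m + 1, by simp only [Fin.lt_def] at hvu; omega, fun | 0 => u | i + 1 => f i, rfl,
      hfm, ?_⟩
    rintro (_ | i) hi
    · exact ⟨huv, hvu⟩
    · exact hf i (by omega)

lemma theta_pos {k : ℕ} (hk : 0 < k) : 0 < theta k :=
  div_pos (by positivity) (by exact_mod_cast hk)

lemma natCast_mul_theta {k : ℕ} (hk : 0 < k) : (k : ℝ) * theta k = 2 * Real.pi := by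
  unfold theta
  field_simp

lemma coe_arg_div_dir (k j : ℕ) {z : ℂ} (hz : z ≠ 0) :
    (Complex.arg (z / dir k j) : Real.Angle) =
      Complex.arg z - (Real.pi / 2 - j * theta k : ℝ) := by
  rw [dir, Complex.arg_div_coe_angle hz (Complex.exp_ne_zero _), Complex.arg_exp,
    Real.Angle.coe_toIocMod]
  norm_cast
  simp

lemma inCone_unique {k : ℕ} {u w : ℂ} {c c' : ℕ} (hc : c < k) (hc' : c' < k)
    (h : inCone k u w c) (h' : inCone k u w c') : c = c' := by
  have hθ : 0 < theta k := theta_pos (by omega)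
  have hwu : w - u ≠ 0 := sub_ne_zero.mpr h.1
  set x := Complex.arg ((w - u) / dir k c)
  set x' := Complex.arg ((w - u) / dir k c')
  have hangle : ((x - x' : ℝ) : Real.Angle) = (((c : ℝ) - c') * theta k : ℝ) := by
    rw [Real.Angle.coe_sub, coe_arg_div_dir k c hwu, coe_arg_div_dir k c' hwu,
      ← Real.Angle.coe_sub, ← Real.Angle.coe_sub, ← Real.Angle.coe_sub]
    congr 1
    ring
  obtain ⟨m, hm⟩ := Real.Angle.angle_eq_iff_two_pi_dvd_sub.mp hangle
  -- `2π = kθ`, so `x - x'` is an integer multiple `d θ` of `θ`; it is also shorter than `θ`.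
  set d : ℤ := (c : ℤ) - c' + m * k
  have hxd : x - x' = d * theta k := by
    simp only [d]
    push_cast
    linear_combination hm - (m : ℝ) * natCast_mul_theta (by omega : 0 < k)
  have hd : d = 0 := by
    have hlt : |x - x'| < theta k :=
      abs_sub_lt_iff.mpr ⟨by linarith [abs_lt.mp h.2, abs_lt.mp h'.2],
        by linarith [abs_lt.mp h.2, abs_lt.mp h'.2]⟩
    rw [hxd, abs_mul, abs_of_pos hθ, mul_lt_iff_lt_one_left hθ] at hlt
    exact Int.abs_lt_one_iff.mp (by exact_mod_cast hlt)
  have hdvd : (k : ℤ) ∣ (c : ℤ) - c' := ⟨-m, by linear_combination hd⟩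
  have := Int.eq_zero_of_abs_lt_dvd hdvd (abs_lt.mpr ⟨by omega, by omega⟩)
  omega

section Routing

variable {k n : ℕ} (C : Config k n)

lemma exists_closest_in_cone {u l : Fin n} (hlu : l < u) {c : ℕ}
    (hl : inCone k (C.V u) (C.V l) c) :
    ∃ j < u, inCone k (C.V u) (C.V j) c ∧ ∀ w < u, inCone k (C.V u) (C.V w) c →
      projDist k (C.V u) (C.V j) c ≤ projDist k (C.V u) (C.V w) c := by
  classical
  obtain ⟨j, hj, hmin⟩ := Finset.exists_min_image
    (Finset.univ.filter fun w => w < u ∧ inCone k (C.V u) (C.V w) c)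
    (fun w => projDist k (C.V u) (C.V w) c) ⟨l, by simp [hlu, hl]⟩
  simp only [Finset.mem_filter, Finset.mem_univ, true_and] at hj hmin
  exact ⟨j, hj.1, hj.2, fun w hwu hw => hmin w ⟨hwu, hw⟩⟩

lemma exists_isRoutingStep_lt (hn : 0 < n) {u : Fin n} (hu : u ≠ ⟨0, hn⟩) :
    ∃ v, IsRoutingStep C hn u v ∧ v < u := by
  have h0u : (⟨0, hn⟩ : Fin n) < u :=
    Fin.lt_def.mpr (Nat.pos_of_ne_zero fun h => hu (Fin.ext h))
  by_cases hadj : (graph C).Adj u ⟨0, hn⟩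
  · exact ⟨⟨0, hn⟩, Or.inl ⟨hadj, rfl⟩, h0u⟩
  obtain ⟨c, hck, hc⟩ := C.gp_cone u ⟨0, hn⟩ h0u
  obtain ⟨j, hju, hj, hmin⟩ := exists_closest_in_cone C h0u hc
  have hedge : (graph C).Adj u j := Or.inl ⟨hju, c, hck, hj, hmin⟩
  refine ⟨j, Or.inr ⟨hadj, hedge, hju, ⟨c, hck, hc, hj, hmin _ h0u hc⟩, ?_⟩, hju⟩
  intro w _ hwu _ c' hc'k hjc' hwc'
  obtain rfl := inCone_unique hc'k hck hjc' hj
  exact hmin w hwu hwc'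

end Routing

/-- In an ordered Θ_k-graph on `n` vertices, from every source
`s` there is a sequence of at most `n - 1` ordered Θ-routing steps leading from
`s` to the first inserted vertex `v₁`, with strictly decreasing insertion
orders along the way. -/
theorem ordered_theta_routing_reaches_v1 {k n : ℕ} (C : Config k n)
    (hn : 0 < n) (s : Fin n) :
    ∃ m ≤ n - 1, ∃ u : ℕ → Fin n, u 0 = s ∧ u m = ⟨0, hn⟩ ∧
      ∀ i < m, IsRoutingStep C hn (u i) (u (i + 1)) ∧ u (i + 1) < u i := by
  obtain ⟨m, hm, u, hu⟩ := exists_descending_chain (IsRoutingStep C hn) ⟨0, hn⟩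
    (fun _ => exists_isRoutingStep_lt C hn) s
  exact ⟨m, by omega, u, hu⟩

end OrderedTheta
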